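/- Let G and H be finite groups. There exists an orthogonal pair (X,Y) of finite bifree (G,H)-bisets if and only if G and H are isomorphic as groups. (Equivalently: B°^Δ(G,H) is non-empty if and only if G ≅ H.) -/

import Mathlib

open MulAction

/-- An isomorphism of `M`-sets: an equivariant bijection. -/
def IsoAsGSets (M X Y : Type*) [SMul M X] [SMul M Y] : Prop :=
  ∃ e : X ≃ Y, ∀ (m : M) (x : X), e (m • x) = m • e x

/-- The twisted diagonal subgroup `Δ(R,α,S) = {(α s, s) | s ∈ S}` of `G × H`,
for an isomorphism `α : S ≃* R`. -/
def twistedDiagonal {G H : Type*} [Group G] [Group H] (R : Subgroup G) (S : Subgroup H)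
    (α : S ≃* R) : Subgroup (G × H) :=
  ((R.subtype.comp α.toMonoidHom).prod S.subtype).range

/-- `Δ(G,φ,H) = {(φ h, h) | h ∈ H} ≤ G × H` for an isomorphism `φ : H ≃* G`. -/
def fullTwistedDiagonal {G H : Type*} [Group G] [Group H] (φ : H ≃* G) : Subgroup (G × H) :=
  (φ.toMonoidHom.prod (MonoidHom.id H)).range

/-- The diagonal subgroup `Δ(R) = {(r,r) | r ∈ R} ≤ G × G`. -/
def diagSubgroup {G : Type*} [Group G] (R : Subgroup G) : Subgroup (G × G) :=
  (R.subtype.prod R.subtype).range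

/-- A `(G,H)`-biset (i.e. a left `(G × H)`-set) is bifree if it is free as a left `G`-set
and free as a right `H`-set. -/
def IsBifree (G H X : Type*) [Group G] [Group H] [MulAction (G × H) X] : Prop :=
  (∀ (g : G) (x : X), (g, (1 : H)) • x = x → g = 1) ∧
  (∀ (h : H) (x : X), ((1 : G), h) • x = x → h = 1)

section Tensor

variable (G H K : Type*) [Group G] [Group H] [Group K]
variable (X Y : Type*) [MulAction (G × H) X] [MulAction (H × K) Y]

/-- The relation on `X × Y` identifying `(x·h, y)` with `(x, h·y)`. -/
def bisetSetoid : Setoid (X × Y) where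
  r p q := ∃ h : H, q.1 = ((1 : G), h) • p.1 ∧ q.2 = (h, (1 : K)) • p.2
  iseqv := by
    constructor
    · intro p
      exact ⟨1, by simp [Prod.mk_one_one], by simp [Prod.mk_one_one]⟩
    · rintro p q ⟨h, h1, h2⟩
      exact ⟨h⁻¹, by simp [h1, smul_smul, Prod.mk_one_one], by simp [h2, smul_smul, Prod.mk_one_one]⟩
    · rintro p q r ⟨h, h1, h2⟩ ⟨h', h1', h2'⟩
      exact ⟨h' * h, by simp [h1, h1', smul_smul], by simp [h2, h2', smul_smul]⟩

/-- The tensor product `X ×_H Y` of a `(G,H)`-biset and an `(H,K)`-biset;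
a `(G,K)`-biset. -/
def BisetTensor : Type _ :=
  Quotient (bisetSetoid G H K X Y)

variable {G H K X Y}

/-- The class of `(x, y)` in `X ×_H Y`. -/
def BisetTensor.mk (p : X × Y) : BisetTensor G H K X Y :=
  Quotient.mk (bisetSetoid G H K X Y) p

variable (G H K X Y)

instance : SMul (G × K) (BisetTensor G H K X Y) :=
  ⟨fun a => Quotient.map (fun p => ((a.1, (1 : H)) • p.1, ((1 : H), a.2) • p.2))
    (by
      rintro p q ⟨h, h1, h2⟩
      exact ⟨h, by simp [h1, smul_smul], by simp [h2, smul_smul]⟩)⟩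

variable {G H K X Y}

theorem BisetTensor.smul_mk (a : G × K) (p : X × Y) :
    a • (BisetTensor.mk p : BisetTensor G H K X Y) =
      BisetTensor.mk ((a.1, (1 : H)) • p.1, ((1 : H), a.2) • p.2) :=
  rfl

variable (G H K X Y)

instance : MulAction (G × K) (BisetTensor G H K X Y) where
  one_smul q := Quotient.inductionOn q fun p => by
    refine Quotient.sound ⟨1, ?_, ?_⟩ <;> simp [Prod.mk_one_one]
  mul_smul a b q := Quotient.inductionOn q fun p => by
    refine Quotient.sound ⟨1, ?_, ?_⟩ <;> simp [smul_smul]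

end Tensor

section Op

/-- The opposite biset: a `(G,H)`-biset viewed as an `(H,G)`-biset via
`h · x · g := g⁻¹ · x · h⁻¹`. -/
def BisetOp (H G X : Type*) : Type _ := (fun _ _ => X) H G

instance BisetOp.instMulAction {G H : Type*} [Group G] [Group H] (X : Type*)
    [MulAction (G × H) X] : MulAction (H × G) (BisetOp H G X) :=
  MulAction.compHom X (MulEquiv.prodComm : H × G ≃* G × H).toMonoidHom

instance BisetOp.instFinite {G H : Type*} (X : Type*) [Finite X] : Finite (BisetOp H G X) :=
  inferInstanceAs (Finite X)

end Op

section Grp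

/-- The group `G` viewed as a `(G,G)`-biset via left and right multiplication. -/
structure BisetGrp (G : Type*) where
  /-- the underlying group element -/
  val : G

instance BisetGrp.instSMul {G : Type*} [Group G] : SMul (G × G) (BisetGrp G) :=
  ⟨fun p x => ⟨p.1 * x.val * p.2⁻¹⟩⟩

theorem BisetGrp.smul_def {G : Type*} [Group G] (p : G × G) (x : BisetGrp G) :
    p • x = ⟨p.1 * x.val * p.2⁻¹⟩ := rfl

instance BisetGrp.instMulAction {G : Type*} [Group G] : MulAction (G × G) (BisetGrp G) where
  one_smul x := by
    cases x
    simp [BisetGrp.smul_def]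
  mul_smul p q x := by
    cases x
    simp [BisetGrp.smul_def, mul_assoc]

instance BisetGrp.instFinite {G : Type*} [Finite G] : Finite (BisetGrp G) :=
  Finite.of_equiv G ⟨fun g => ⟨g⟩, fun x => x.val, fun _ => rfl, fun _ => rfl⟩

end Grp

/-- A pair `(X,Y)` of `(G,H)`-bisets is an orthogonal pair if
`(X ×_H X°) ⊔ (Y ×_H Y°) ≅ G ⊔ (X ×_H Y°) ⊔ (Y ×_H X°)` as `(G,G)`-bisets;
this encodes the equation `([X] - [Y]) ·_H ([X] - [Y])° = [G]` in `B^Δ(G,G)`. -/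
def IsOrthogonalPair (G H : Type*) [Group G] [Group H] (X Y : Type*)
    [MulAction (G × H) X] [MulAction (G × H) Y] : Prop :=
  IsoAsGSets (G × G)
    (BisetTensor G H G X (BisetOp H G X) ⊕ BisetTensor G H G Y (BisetOp H G Y))
    (BisetGrp G ⊕ (BisetTensor G H G X (BisetOp H G Y) ⊕ BisetTensor G H G Y (BisetOp H G X)))

section Iota

/-- For a `G`-set `Z`, the `(G,G)`-biset `ι(Z) = G × Z` with action
`(g₁,g₂) • (g,z) = (g₁ g g₂⁻¹, g₂ • z)`. -/
structure IotaBiset (G Z : Type*) where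
  /-- the group component -/
  fst : G
  /-- the `G`-set component -/
  snd : Z

instance IotaBiset.instSMul {G Z : Type*} [Group G] [MulAction G Z] :
    SMul (G × G) (IotaBiset G Z) :=
  ⟨fun p x => ⟨p.1 * x.fst * p.2⁻¹, p.2 • x.snd⟩⟩

theorem IotaBiset.smul_def {G Z : Type*} [Group G] [MulAction G Z] (p : G × G)
    (x : IotaBiset G Z) : p • x = ⟨p.1 * x.fst * p.2⁻¹, p.2 • x.snd⟩ := rfl

instance IotaBiset.instMulAction {G Z : Type*} [Group G] [MulAction G Z] :
    MulAction (G × G) (IotaBiset G Z) where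
  one_smul x := by
    cases x
    simp [IotaBiset.smul_def]
  mul_smul p q x := by
    cases x
    simp [IotaBiset.smul_def, mul_assoc, mul_smul]

instance IotaBiset.instFinite {G Z : Type*} [Finite G] [Finite Z] : Finite (IotaBiset G Z) :=
  Finite.of_equiv (G × Z) ⟨fun p => ⟨p.1, p.2⟩, fun x => (x.fst, x.snd), fun _ => rfl,
    fun _ => rfl⟩

end Iota

/-- An orthogonal pair of finite bifree `(G,H)`-bisets, encoding an element
`γ = [X] - [Y]` of `B^Δ(G,H)` with `γ ·_H γ° = [G]`. -/
structure OrthPair (G H : Type) [Group G] [Group H] : Type 1 where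
  /-- the first biset -/
  X : Type
  /-- the second biset -/
  Y : Type
  [actX : MulAction (G × H) X]
  [actY : MulAction (G × H) Y]
  [finX : Finite X]
  [finY : Finite Y]
  bifreeX : IsBifree G H X
  bifreeY : IsBifree G H Y
  orth : IsOrthogonalPair G H X Y

attribute [instance] OrthPair.actX OrthPair.actY OrthPair.finX OrthPair.finY

/- If `(X, Y)` is an orthogonal pair, counting elements (using `|X ×_H Z| · |H| = |X| · |Z|`
for right-free `X`) gives `(|X| - |Y|)² = |G| · |H|`; since `|H|` divides `|X|` and `|Y|`, it divides
`|G|`. The element `1 ∈ G` corresponds to a point of `X ×_H X°` or `Y ×_H Y°` fixed by the diagonal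
of `G × G`; the stabilizer of a representative is then the graph of an injective homomorphism
`G → H`. Hence `|G| = |H|` and that homomorphism is an isomorphism. Conversely, for `φ : H ≃* G`,
the group `G` twisted by `φ` together with the empty biset is an orthogonal pair. -/

instance (M : Type*) [Monoid M] : MulAction M Empty where
  smul _ e := e.elim
  one_smul e := e.elim
  mul_smul _ _ e := e.elim

instance {G H X : Type*} [IsEmpty X] : IsEmpty (BisetOp H G X) :=
  inferInstanceAs (IsEmpty X)

namespace BisetTensor

variable {G H K X Y : Type*} [Group G] [Group H] [Group K]
  [MulAction (G × H) X] [MulAction (H × K) Y]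

instance [Finite X] [Finite Y] : Finite (BisetTensor G H K X Y) :=
  Quotient.finite _

instance [IsEmpty X] : IsEmpty (BisetTensor G H K X Y) :=
  ⟨fun t => Quotient.inductionOn t fun p => isEmptyElim p.1⟩

instance [IsEmpty Y] : IsEmpty (BisetTensor G H K X Y) :=
  ⟨fun t => Quotient.inductionOn t fun p => isEmptyElim p.2⟩

theorem mk_eq_mk_iff {p q : X × Y} :
    mk p = (mk q : BisetTensor G H K X Y) ↔
      ∃ h : H, q.1 = ((1 : G), h) • p.1 ∧ q.2 = (h, (1 : K)) • p.2 :=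
  Quotient.eq (r := bisetSetoid G H K X Y)

noncomputable def equivFiber (hfree : ∀ (h : H) (x : X), ((1 : G), h) • x = x → h = 1)
    (p : X × Y) : H ≃ {q : X × Y // mk q = (mk p : BisetTensor G H K X Y)} :=
  Equiv.ofBijective (fun h => ⟨(((1 : G), h) • p.1, (h, (1 : K)) • p.2),
      (mk_eq_mk_iff.2 ⟨h, rfl, rfl⟩).symm⟩) <| by
    constructor
    · intro h₁ h₂ heq
      have h12 : ((1 : G), h₂⁻¹ * h₁) • p.1 = p.1 := by
        have := congrArg (fun q => ((1 : G), h₂⁻¹) • q.1.1) heq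
        simpa [smul_smul, Prod.mk_one_one] using this
      simpa [inv_mul_eq_one, eq_comm] using hfree _ _ h12
    · rintro ⟨q, hq⟩
      obtain ⟨h, h1, h2⟩ := mk_eq_mk_iff.1 hq.symm
      exact ⟨h, Subtype.ext (Prod.ext h1.symm h2.symm)⟩

theorem card_mul_card [Finite X] [Finite Y]
    (hfree : ∀ (h : H) (x : X), ((1 : G), h) • x = x → h = 1) :
    Nat.card (BisetTensor G H K X Y) * Nat.card H = Nat.card X * Nat.card Y := by
  have := Fintype.ofFinite (BisetTensor G H K X Y)
  have hfiber (t : BisetTensor G H K X Y) : Nat.card {q : X × Y // mk q = t} = Nat.card H :=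
    Quotient.inductionOn t fun p => (Nat.card_congr (equivFiber hfree p)).symm
  calc Nat.card (BisetTensor G H K X Y) * Nat.card H
      = ∑ t : BisetTensor G H K X Y, Nat.card {q : X × Y // mk q = t} := by
        simp [hfiber, Finset.sum_const, Finset.card_univ, Nat.card_eq_fintype_card]
    _ = Nat.card (X × Y) := by
        rw [← Nat.card_sigma, Nat.card_congr (Equiv.sigmaFiberEquiv mk)]
    _ = Nat.card X * Nat.card Y := Nat.card_prod X Y

theorem exists_smul_eq_of_smul_mk_eq {g : G} {k : K} {p : X × Y}
    (hp : (g, k) • (mk p : BisetTensor G H K X Y) = mk p) : ∃ h : H, (g, h) • p.1 = p.1 := by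
  obtain ⟨h, h1, -⟩ := mk_eq_mk_iff.1 hp
  refine ⟨h, ?_⟩
  simpa [smul_smul] using h1.symm

end BisetTensor

theorem card_dvd_card_of_free {G H X : Type*} [Group G] [Group H] [MulAction (G × H) X]
    [Finite X] (hfree : ∀ (h : H) (x : X), ((1 : G), h) • x = x → h = 1) :
    Nat.card H ∣ Nat.card X := by
  have := BisetTensor.card_mul_card (K := G) (Y := PUnit.{1}) hfree
  rw [Nat.card_unique (α := PUnit.{1}), mul_one] at this
  exact Dvd.intro_left _ this

namespace IsBifree

variable {G H X : Type*} [Group G] [Group H] [MulAction (G × H) X]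

theorem exists_injective_of_forall_exists_smul_eq (hX : IsBifree G H X) (x : X)
    (hx : ∀ g : G, ∃ h : H, (g, h) • x = x) : ∃ f : G →* H, Function.Injective f := by
  let S := stabilizer (G × H) x
  let p : S →* G := (MonoidHom.fst G H).comp S.subtype
  have hp : Function.Bijective p := by
    refine ⟨(injective_iff_map_eq_one p).2 fun s hs => ?_, fun g => ?_⟩
    · obtain ⟨⟨g, h⟩, hs'⟩ := s
      obtain rfl : g = 1 := hs
      obtain rfl := hX.2 h x hs'
      rfl
    · obtain ⟨h, hh⟩ := hx g
      exact ⟨⟨(g, h), hh⟩, rfl⟩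
  let q : S →* H := (MonoidHom.snd G H).comp S.subtype
  have hq : Function.Injective q := by
    refine (injective_iff_map_eq_one q).2 fun s hs => ?_
    obtain ⟨⟨g, h⟩, hs'⟩ := s
    obtain rfl : h = 1 := hs
    obtain rfl := hX.1 g x hs'
    rfl
  let e := MulEquiv.ofBijective p hp
  exact ⟨q.comp e.symm.toMonoidHom, hq.comp e.symm.injective⟩

theorem exists_injective_of_forall_exists_smul_tensor_eq {K Z : Type*} [Group K]
    [MulAction (H × K) Z] (hX : IsBifree G H X) (t : BisetTensor G H K X Z)
    (ht : ∀ g : G, ∃ k : K, (g, k) • t = t) : ∃ f : G →* H, Function.Injective f := by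
  obtain ⟨p, rfl⟩ : ∃ p, BisetTensor.mk p = t := Quotient.exists_rep t
  refine hX.exists_injective_of_forall_exists_smul_eq p.1 fun g => ?_
  obtain ⟨k, hk⟩ := ht g
  exact BisetTensor.exists_smul_eq_of_smul_mk_eq hk

end IsBifree

theorem dvd_of_sub_sq_eq_mul {R : Type*} [CommRing R] [IsDomain R] {a b x y : R} (hb : b ≠ 0) (hx : b ∣ x) (hy : b ∣ y)
    (h : (x - y) ^ 2 = a * b) : b ∣ a := by
  have : b * b ∣ a * b := h ▸ sq (x - y) ▸ mul_dvd_mul (dvd_sub hx hy) (dvd_sub hx hy)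
  exact (mul_dvd_mul_iff_right hb).1 this

namespace IsOrthogonalPair

variable {G H X Y : Type*} [Group G] [Group H] [MulAction (G × H) X] [MulAction (G × H) Y]

theorem exists_injective (hX : IsBifree G H X) (hY : IsBifree G H Y)
    (horth : IsOrthogonalPair G H X Y) : ∃ f : G →* H, Function.Injective f := by
  obtain ⟨e, he⟩ := horth
  have hfix (g : G) : (g, g) • e.symm (.inl ⟨1⟩) = e.symm (.inl ⟨1⟩) := by
    apply e.injective
    rw [he, Equiv.apply_symm_apply, Sum.smul_inl, BisetGrp.smul_def, mul_one, mul_inv_cancel]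
  rcases ht : e.symm (.inl ⟨1⟩) with t | t <;> rw [ht] at hfix
  · exact hX.exists_injective_of_forall_exists_smul_tensor_eq t
      fun g => ⟨g, Sum.inl_injective (hfix g)⟩
  · exact hY.exists_injective_of_forall_exists_smul_tensor_eq t
      fun g => ⟨g, Sum.inr_injective (hfix g)⟩

theorem sub_sq_card [Finite G] [Finite X] [Finite Y]
    (hX : ∀ (h : H) (x : X), ((1 : G), h) • x = x → h = 1)
    (hY : ∀ (h : H) (y : Y), ((1 : G), h) • y = y → h = 1) (horth : IsOrthogonalPair G H X Y) :
    ((Nat.card X : ℤ) - Nat.card Y) ^ 2 = Nat.card G * Nat.card H := by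
  obtain ⟨e, -⟩ := horth
  have hG : Nat.card (BisetGrp G) = Nat.card G :=
    Nat.card_congr ⟨BisetGrp.val, .mk, fun _ => rfl, fun _ => rfl⟩
  have hcard := Nat.card_congr e
  simp only [Nat.card_sum, hG] at hcard
  have hXX := BisetTensor.card_mul_card (K := G) (Y := BisetOp H G X) hX
  have hYY := BisetTensor.card_mul_card (K := G) (Y := BisetOp H G Y) hY
  have hXY := BisetTensor.card_mul_card (K := G) (Y := BisetOp H G Y) hX
  have hYX := BisetTensor.card_mul_card (K := G) (Y := BisetOp H G X) hY
  have hXo : Nat.card (BisetOp H G X) = Nat.card X := rfl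
  have hYo : Nat.card (BisetOp H G Y) = Nat.card Y := rfl
  rw [hXo] at hXX hYX
  rw [hYo] at hYY hXY
  zify at hcard hXX hYY hXY hYX
  linear_combination (Nat.card H : ℤ) * hcard - hXX - hYY + hXY + hYX

theorem card_dvd_card [Finite G] [Finite H] [Finite X] [Finite Y] (hX : IsBifree G H X)
    (hY : IsBifree G H Y) (horth : IsOrthogonalPair G H X Y) : Nat.card H ∣ Nat.card G :=
  Int.natCast_dvd_natCast.1 <| dvd_of_sub_sq_eq_mul (Nat.cast_ne_zero.2 Nat.card_pos.ne')
    (Int.natCast_dvd_natCast.2 (card_dvd_card_of_free hX.2))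
    (Int.natCast_dvd_natCast.2 (card_dvd_card_of_free hY.2)) (horth.sub_sq_card hX.2 hY.2)

theorem of_isEmpty [IsEmpty Y]
    (hX : IsoAsGSets (G × G) (BisetTensor G H G X (BisetOp H G X)) (BisetGrp G)) :
    IsOrthogonalPair G H X Y := by
  obtain ⟨e, he⟩ := hX
  refine ⟨e.sumCongr (Equiv.equivOfIsEmpty _ _), ?_⟩
  rintro m (t | t)
  · simp [he]
  · exact isEmptyElim t

end IsOrthogonalPair

@[ext]
structure TwistedBiset {G H : Type*} [Group G] [Group H] (φ : H →* G) where
  val : G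

namespace TwistedBiset

variable {G H : Type*} [Group G] [Group H] (φ : H →* G)

instance : SMul (G × H) (TwistedBiset φ) := ⟨fun p x => ⟨p.1 * x.val * (φ p.2)⁻¹⟩⟩

theorem smul_val (p : G × H) (x : TwistedBiset φ) : (p • x).val = p.1 * x.val * (φ p.2)⁻¹ :=
  rfl

instance : MulAction (G × H) (TwistedBiset φ) where
  one_smul x := by ext; simp [smul_val]
  mul_smul p q x := by ext; simp [smul_val, mul_assoc]

theorem smul_op_val (p : H × G) (x : BisetOp H G (TwistedBiset φ)) :
    (p • x).val = p.2 * x.val * (φ p.1)⁻¹ :=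
  rfl

instance [Finite G] : Finite (TwistedBiset φ) :=
  Finite.of_injective val fun _ _ => TwistedBiset.ext

variable {φ}

theorem isBifree (hφ : Function.Injective φ) : IsBifree G H (TwistedBiset φ) := by
  refine ⟨fun g x hx => ?_, fun h x hx => hφ ?_⟩
  · simpa [TwistedBiset.ext_iff, smul_val] using hx
  · simpa [TwistedBiset.ext_iff, smul_val] using hx

theorem isoAsGSets_tensor_op (hφ : Function.Surjective φ) :
    IsoAsGSets (G × G) (BisetTensor G H G (TwistedBiset φ) (BisetOp H G (TwistedBiset φ)))
      (BisetGrp G) := by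
  let f : BisetTensor G H G (TwistedBiset φ) (BisetOp H G (TwistedBiset φ)) → BisetGrp G :=
    Quotient.lift (fun p => ⟨p.1.val * p.2.val⁻¹⟩) <| by
      rintro p q ⟨h, h1, h2⟩
      simp [h1, h2, smul_val, smul_op_val, mul_assoc]
  refine ⟨Equiv.ofBijective f ⟨fun s t hst => ?_, fun g => ⟨BisetTensor.mk (⟨g.val⟩, ⟨1⟩), ?_⟩⟩, ?_⟩
  · obtain ⟨p, rfl⟩ : ∃ p, BisetTensor.mk p = s := Quotient.exists_rep s
    obtain ⟨q, rfl⟩ : ∃ q, BisetTensor.mk q = t := Quotient.exists_rep t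
    have hpq : p.1.val * p.2.val⁻¹ = q.1.val * q.2.val⁻¹ := congrArg BisetGrp.val hst
    obtain ⟨h, hh⟩ := hφ (q.1.val⁻¹ * p.1.val)
    refine BisetTensor.mk_eq_mk_iff.2 ⟨h, TwistedBiset.ext ?_, TwistedBiset.ext ?_⟩
    · simp [smul_val, hh]
    · rw [smul_op_val, hh, mul_inv_eq_iff_eq_mul.1 hpq.symm]
      group
  · show BisetGrp.mk (g.val * 1⁻¹) = g
    simp
  · intro m t
    obtain ⟨p, rfl⟩ : ∃ p, BisetTensor.mk p = t := Quotient.exists_rep t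
    show BisetGrp.mk _ = m • BisetGrp.mk _
    simp [BisetGrp.smul_def, smul_val, smul_op_val, mul_assoc]

end TwistedBiset

/-- there exists an orthogonal pair of finite bifree `(G,H)`-bisets if and
only if `G` and `H` are isomorphic (i.e. `B°^Δ(G,H) ≠ ∅` iff `G ≅ H`). -/
theorem statement10 (G H : Type) [Group G] [Group H] [Finite G] [Finite H] :
    Nonempty (OrthPair G H) ↔ Nonempty (G ≃* H) := by
  constructor
  · rintro ⟨P⟩
    obtain ⟨f, hf⟩ := P.orth.exists_injective P.bifreeX P.bifreeY
    have hcard : Nat.card G = Nat.card H :=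
      le_antisymm (Nat.card_le_card_of_injective f hf)
        (Nat.le_of_dvd Nat.card_pos (P.orth.card_dvd_card P.bifreeX P.bifreeY))
    exact ⟨MulEquiv.ofBijective f ((Nat.bijective_iff_injective_and_card f).2 ⟨hf, hcard⟩)⟩
  · rintro ⟨e⟩
    exact ⟨{
      X := TwistedBiset e.symm.toMonoidHom
      Y := Empty
      bifreeX := TwistedBiset.isBifree e.symm.injective
      bifreeY := ⟨fun _ x _ => x.elim, fun _ x _ => x.elim⟩
      orth := .of_isEmpty (TwistedBiset.isoAsGSets_tensor_op e.symm.surjective) }⟩
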